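/- For the two-loops quiver over ℂ and every n ≥ 2, the subspace Im D_{n−1} ⊆ ℂ(Q_n||Q_1) is invariant under the endomorphism u ↦ [H,u]_Q; the eigenvalues of this endomorphism restricted to Im D_{n−1} are exactly the integers n−1−2l for l = 0, 1, …, n−1, and for each such l the corresponding eigenspace of the restriction has dimension C(n−1,l). -/

import Mathlib

/-! Two-loops quiver base: one vertex `e`, two loops `a`, `b`.

`Q_n` is the set of words of length `n` in `{a, b}` (all paths are parallel, since
there is a single vertex), and `ℂ(Q_n ∥ Q_1)` is the complex vector space with basis
`Q_n ∥ Q_1 = Q_n × Q_1`. -/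

namespace TwoLoops

/-- The two arrows (loops) of the quiver. -/
inductive TL : Type
  | a : TL
  | b : TL
deriving DecidableEq

instance : Fintype TL := ⟨{TL.a, TL.b}, fun x => by cases x <;> simp⟩

/-- Paths of length `n` in the two-loops quiver: words of length `n` in `{a, b}`. -/
abbrev Wd (n : ℕ) : Type := Fin n → TL

/-- `ℂ(Q_n ∥ Q_1)`: the complex vector space with basis `Q_n ∥ Q_1 = Q_n × Q_1`. -/
abbrev CQ1 (n : ℕ) : Type := (Wd n × TL) → ℂ

/-- `ℂ(Q_n ∥ Q_0)`: basis `Q_n ∥ Q_0 = Q_n` (the unique vertex `e` is omitted). -/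
abbrev CQ0 (n : ℕ) : Type := Wd n → ℂ

/-- The basis element `(γ, x)` of `ℂ(Q_n ∥ Q_1)`. -/
noncomputable def bE {n : ℕ} (γ : Wd n) (x : TL) : CQ1 n := Pi.single (γ, x) (1 : ℂ)

/-- The Gerstenhaber-type bracket `[·,·]_Q` on basis elements, for a degree-one
element `(c,x) ∈ Q_1 ∥ Q_1` against `(γ,y) ∈ Q_n ∥ Q_1`:
`[(c,x),(γ,y)]_Q = δ_{c,y}·(γ,x) − Σ_{i=1}^n δ_{γ_i,x}·(γ ⋄_i c, y)`,
which is the general formula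
`Σ_i (−1)^{(i−1)(m−1)} (α,x)∘_i(β,y) − (−1)^{(n−1)(m−1)} Σ_i (−1)^{(i−1)(n−1)} (β,y)∘_i(α,x)`
specialized to the case where the left argument has degree one (all signs are `+1`;
here `γ ⋄_i c` is the path obtained from `γ` by replacing its `i`-th arrow by `c`). -/
noncomputable def brB {n : ℕ} (P : Wd 1 × TL) (R : Wd n × TL) : CQ1 n :=
  (if P.1 0 = R.2 then bE R.1 P.2 else 0)
    - ∑ i : Fin n,
        (if R.1 i = P.2 then bE (Function.update R.1 i (P.1 0)) R.2 else 0)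

/-- The bracket `[f, ·]_Q` with a degree-one element `f ∈ ℂ(Q_1 ∥ Q_1)`, as a linear
endomorphism of `ℂ(Q_n ∥ Q_1)` (bilinear extension of `brB`). -/
noncomputable def brL {n : ℕ} (f : CQ1 1) : CQ1 n →ₗ[ℂ] CQ1 n :=
  ∑ P : Wd 1 × TL, ∑ R : Wd n × TL,
    f P • ((LinearMap.proj R : CQ1 n →ₗ[ℂ] ℂ).smulRight (brB P R))

/-- `H = (b,b) − (a,a)`. -/
noncomputable def H : CQ1 1 := bE (fun _ => TL.b) TL.b - bE (fun _ => TL.a) TL.a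

/-- `E = (a,b)`. -/
noncomputable def E : CQ1 1 := bE (fun _ => TL.a) TL.b

/-- `F = (b,a)`. -/
noncomputable def F : CQ1 1 := bE (fun _ => TL.b) TL.a

/-- `I = (a,a) + (b,b)`. -/
noncomputable def Iel : CQ1 1 := bE (fun _ => TL.a) TL.a + bE (fun _ => TL.b) TL.b

/-- `D_n` on basis elements: `D_n(γ,e) = (aγ,a) + (bγ,b) + (−1)^{n+1}((γa,a) + (γb,b))`. -/
noncomputable def DB (n : ℕ) (γ : Wd n) : CQ1 (n + 1) :=
  bE (Fin.cons TL.a γ) TL.a + bE (Fin.cons TL.b γ) TL.b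
    + ((-1 : ℂ) ^ (n + 1)) • (bE (Fin.snoc γ TL.a) TL.a + bE (Fin.snoc γ TL.b) TL.b)

/-- The linear map `D_n : ℂ(Q_n ∥ Q_0) → ℂ(Q_{n+1} ∥ Q_1)`. -/
noncomputable def Dmap (n : ℕ) : CQ0 n →ₗ[ℂ] CQ1 (n + 1) :=
  ∑ γ : Wd n, (LinearMap.proj γ : CQ0 n →ₗ[ℂ] ℂ).smulRight (DB n γ)

/-- `a(γ)`: the number of occurrences of the arrow `a` in the path `γ`. -/
def ca {n : ℕ} (γ : Wd n) : ℕ := (Finset.univ.filter fun i => γ i = TL.a).card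

/-- `b(γ)`: the number of occurrences of the arrow `b` in the path `γ`. -/
def cb {n : ℕ} (γ : Wd n) : ℕ := (Finset.univ.filter fun i => γ i = TL.b).card

/-- `v(γ) = a(γ) − b(γ)`. -/
def vv {n : ℕ} (γ : Wd n) : ℤ := (ca γ : ℤ) - (cb γ : ℤ)


/-- The endomorphism `u ↦ [H,u]_Q` of `ℂ(Q_{m+1} ∥ Q_1)` restricted to `Im D_m`. -/
noncomputable def HonImD (m : ℕ)
    (hInv : ∀ u ∈ LinearMap.range (Dmap m),
      (brL H : CQ1 (m + 1) →ₗ[ℂ] CQ1 (m + 1)) u ∈ LinearMap.range (Dmap m)) :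
    Module.End ℂ (LinearMap.range (Dmap m)) :=
  (brL H : CQ1 (m + 1) →ₗ[ℂ] CQ1 (m + 1)).restrict hInv

end TwoLoops

/-! Every basis element `(δ, y)` of `ℂ(Q_n ∥ Q_1)` is an eigenvector of `[H, ·]_Q`, with
eigenvalue `v(δ) - v(y)`, where `v` counts letters `a` minus letters `b`. The four terms of
`D_m(γ, e)` therefore share the eigenvalue `v(γ)`, i.e. `[H, ·]_Q ∘ D_m = D_m ∘ diag(v)`.
For `m ≥ 1` the map `D_m` is injective: the coefficient of `(xγ, x)` in `D_m c`, for `x` different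
from the last letter of `γ`, is `c(γ)`. So the restriction of `[H, ·]_Q` to `Im D_m` is conjugate
to `diag(v)` on `ℂ(Q_m ∥ Q_0)`, whose `(m - 2l)`-eigenspace has a basis indexed by the words with
exactly `l` letters `b`. -/

open Module Matrix

section Eigen

variable {K M N : Type*} [Field K] [AddCommGroup M] [Module K M] [AddCommGroup N] [Module K N]

lemma Module.End.eigenspace_conj (e : M ≃ₗ[K] N) (f : End K M) (μ : K) :
    eigenspace (e.conj f) μ = (eigenspace f μ).map (e : M →ₗ[K] N) := by
  have h : e.conj f - μ • 1 = e.conj (f - μ • 1) := by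
    ext x
    simp
  rw [eigenspace_def, eigenspace_def, h, LinearEquiv.conj_apply, LinearMap.ker_comp,
    LinearEquiv.ker_comp, Submodule.comap_equiv_eq_map_symm, LinearEquiv.symm_symm]

lemma Module.End.hasEigenvalue_conj_iff (e : M ≃ₗ[K] N) (f : End K M) (μ : K) :
    HasEigenvalue (e.conj f) μ ↔ HasEigenvalue f μ := by
  rw [hasEigenvalue_iff, hasEigenvalue_iff, eigenspace_conj, Ne, Submodule.map_eq_bot_iff]

lemma Matrix.finrank_eigenspace_toLin'_diagonal {ι : Type*} [Fintype ι] [DecidableEq ι]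
    (d : ι → K) (μ : K) :
    finrank K (End.eigenspace (toLin' (diagonal d)) μ) = Nat.card {i // d i = μ} := by
  have hshift : toLin' (diagonal d) - μ • 1 = toLin' (diagonal fun i => d i - μ) := by
    rw [End.one_eq_id, ← toLin'_one, ← map_smul, ← map_sub, smul_one_eq_diagonal, diagonal_sub]
  have hrank : Nat.card {i // ¬d i = μ}
      + finrank K (LinearMap.ker (toLin' (diagonal fun i => d i - μ))) = Nat.card ι := by
    have := Classical.decEq K
    have h := (toLin' (diagonal fun i => d i - μ)).finrank_range_add_finrank_ker
    rw [toLin'_apply', ← Matrix.rank, rank_diagonal, finrank_fintype_fun_eq_card,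
      ← Nat.card_eq_fintype_card, ← Nat.card_eq_fintype_card] at h
    rw [toLin'_apply', ← h, Nat.card_congr (Equiv.subtypeEquivRight fun i => sub_ne_zero.symm)]
  have hcompl : Nat.card {i // d i = μ} + Nat.card {i // ¬d i = μ} = Nat.card ι := by
    classical
    rw [← Nat.card_sum]
    exact Nat.card_congr (Equiv.sumCompl _)
  rw [End.eigenspace_def, hshift]
  omega

end Eigen

lemma LinearMap.restrict_range_eq_conj {R M N : Type*} [CommRing R] [AddCommGroup M] [Module R M]
    [AddCommGroup N] [Module R N] {f : M →ₗ[R] N} (hf : Function.Injective f) {g : End R N}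
    {d : End R M} (hgd : g ∘ₗ f = f ∘ₗ d) (hg : ∀ u ∈ range f, g u ∈ range f) :
    g.restrict hg = (LinearEquiv.ofInjective f hf).conj d := by
  ext x : 1
  obtain ⟨c, rfl⟩ := (LinearEquiv.ofInjective f hf).surjective x
  apply Subtype.ext
  simpa using LinearMap.congr_fun hgd c

namespace TwoLoops

def arrowSign : TL → ℤ
  | TL.a => 1
  | TL.b => -1

lemma vv_eq_sum_arrowSign {n : ℕ} (γ : Wd n) : vv γ = ∑ i, arrowSign (γ i) := by
  simp only [vv, ca, cb, Finset.card_filter, Nat.cast_sum, ← Finset.sum_sub_distrib]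
  refine Finset.sum_congr rfl fun i _ => ?_
  cases γ i <;> simp [arrowSign]

lemma vv_cons {n : ℕ} (x : TL) (γ : Wd n) :
    vv (Fin.cons x γ : Wd (n + 1)) = arrowSign x + vv γ := by
  simp only [vv_eq_sum_arrowSign, Fin.sum_univ_succ, Fin.cons_zero, Fin.cons_succ]

lemma vv_snoc {n : ℕ} (x : TL) (γ : Wd n) :
    vv (Fin.snoc γ x : Wd (n + 1)) = vv γ + arrowSign x := by
  simp only [vv_eq_sum_arrowSign, Fin.sum_univ_castSucc, Fin.snoc_castSucc, Fin.snoc_last]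

lemma ca_add_cb {n : ℕ} (γ : Wd n) : ca γ + cb γ = n := by
  rw [ca, cb, ← Finset.card_union_of_disjoint (Finset.disjoint_filter.2 fun i _ h => by simp [h]),
    ← Finset.filter_or, Finset.filter_true_of_mem (fun i _ => by cases γ i <;> simp),
    Finset.card_univ, Fintype.card_fin]

lemma vv_eq_sub_two_mul_cb {n : ℕ} (γ : Wd n) : vv γ = n - 2 * cb γ := by
  have := ca_add_cb γ
  rw [vv]
  omega

lemma brL_apply {n : ℕ} (f : CQ1 1) (v : CQ1 n) :
    brL f v = ∑ P, ∑ R, (f P * v R) • brB P R := by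
  simp [brL, mul_smul]

lemma brB_diag_apply {n : ℕ} (x : TL) (δ : Wd n) (y : TL) :
    brB ((fun _ => x : Wd 1), x) (δ, y)
      = ((if x = y then 1 else 0 : ℂ) - (Finset.univ.filter fun i => δ i = x).card) • bE δ y := by
  have hupd : ∀ i, (if δ i = x then bE (Function.update δ i x) y else 0)
      = if δ i = x then bE δ y else 0 := fun i => by
    split_ifs with h
    · rw [← h, Function.update_eq_self]
    · rfl
  have hxy : (if x = y then bE δ x else 0) = if x = y then bE δ y else 0 := by
    split_ifs with h
    · rw [h]
    · rfl
  simp only [brB, hupd, hxy, ← Finset.sum_filter, Finset.sum_const, ← Nat.cast_smul_eq_nsmul ℂ,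
    sub_smul, ite_smul, one_smul, zero_smul]

lemma brL_H_bE {n : ℕ} (δ : Wd n) (y : TL) :
    brL H (bE δ y) = ((vv δ - arrowSign y : ℤ) : ℂ) • bE δ y := by
  have hH : brL H (bE δ y)
      = brB ((fun _ => TL.b), TL.b) (δ, y) - brB ((fun _ => TL.a), TL.a) (δ, y) := by
    simp [brL_apply, H, bE, Pi.single_apply, sub_smul]
  rw [hH, brB_diag_apply, brB_diag_apply, ← sub_smul, vv, ← ca, ← cb]
  congr 1
  cases y <;> simp [arrowSign] <;> ring

lemma brL_H_DB (m : ℕ) (γ : Wd m) : brL H (DB m γ) = (vv γ : ℂ) • DB m γ := by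
  simp only [DB, map_add, map_smul, brL_H_bE, vv_cons, vv_snoc, add_sub_cancel_left,
    add_sub_cancel_right, smul_add, smul_comm ((-1 : ℂ) ^ (m + 1))]

noncomputable def vvDiag (m : ℕ) : End ℂ (CQ0 m) := toLin' (diagonal fun γ : Wd m => (vv γ : ℂ))

lemma Dmap_apply (m : ℕ) (c : CQ0 m) : Dmap m c = ∑ γ, c γ • DB m γ := by
  simp [Dmap]

lemma brL_H_comp_Dmap (m : ℕ) : brL H ∘ₗ Dmap m = Dmap m ∘ₗ vvDiag m := by
  refine LinearMap.ext fun c => ?_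
  simp [Dmap_apply, brL_H_DB, vvDiag, mulVec_diagonal, smul_smul, mul_comm]

lemma brL_H_mapsTo_range_Dmap (m : ℕ) :
    ∀ u ∈ LinearMap.range (Dmap m), brL H u ∈ LinearMap.range (Dmap m) := by
  rintro u ⟨c, rfl⟩
  exact ⟨vvDiag m c, (LinearMap.congr_fun (brL_H_comp_Dmap m) c).symm⟩

lemma DB_apply_cons_self {k : ℕ} (δ γ : Wd (k + 1)) {x : TL} (hx : γ (Fin.last k) ≠ x) :
    DB (k + 1) δ (Fin.cons x γ, x) = if δ = γ then 1 else 0 := by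
  have hsnoc : (Fin.cons x γ : Wd (k + 2)) ≠ Fin.snoc δ x := fun h =>
    hx (by simpa [Fin.succ_last] using congrFun h (Fin.last k).succ)
  cases x <;> simp [DB, bE, Pi.single_apply, Fin.cons_inj, eq_comm, hsnoc]

lemma Dmap_apply_cons_self {k : ℕ} (c : CQ0 (k + 1)) (γ : Wd (k + 1)) {x : TL}
    (hx : γ (Fin.last k) ≠ x) : Dmap (k + 1) c (Fin.cons x γ, x) = c γ := by
  simp [Dmap_apply, DB_apply_cons_self _ γ hx]

lemma Dmap_injective {m : ℕ} (hm : 1 ≤ m) : Function.Injective (Dmap m) := by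
  obtain ⟨k, rfl⟩ := Nat.exists_eq_add_of_le' hm
  intro c c' h
  funext γ
  obtain ⟨x, hx⟩ : ∃ x, γ (Fin.last k) ≠ x := by
    cases γ (Fin.last k)
    exacts [⟨TL.b, nofun⟩, ⟨TL.a, nofun⟩]
  rw [← Dmap_apply_cons_self c γ hx, ← Dmap_apply_cons_self c' γ hx, h]

def wordEquivFinset (m : ℕ) : Wd m ≃ Finset (Fin m) where
  toFun γ := Finset.univ.filter fun i => γ i = TL.b
  invFun s i := if i ∈ s then TL.b else TL.a
  left_inv γ := funext fun i => by cases h : γ i <;> simp [h]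
  right_inv s := by ext i; by_cases hi : i ∈ s <;> simp [hi]

lemma card_cb_eq (m l : ℕ) : Nat.card {γ : Wd m // cb γ = l} = m.choose l := by
  rw [Nat.card_congr ((wordEquivFinset m).subtypeEquiv (p := fun γ => cb γ = l)
    (q := fun s => s.card = l) fun _ => Iff.rfl), Nat.card_eq_fintype_card,
    Fintype.card_finset_len, Fintype.card_fin]

lemma vv_eq_iff_cb_eq {m : ℕ} (γ : Wd m) (l : ℕ) : (vv γ : ℂ) = m - 2 * l ↔ cb γ = l := by
  rw [vv_eq_sub_two_mul_cb]
  push_cast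
  constructor
  · intro h
    exact_mod_cast (by linear_combination -h / 2 : (cb γ : ℂ) = l)
  · rintro rfl
    rfl

lemma exists_vv_eq_iff (m : ℕ) (μ : ℂ) :
    (∃ γ : Wd m, (vv γ : ℂ) = μ) ↔ ∃ l : ℕ, l ≤ m ∧ μ = m - 2 * l := by
  constructor
  · rintro ⟨γ, rfl⟩
    exact ⟨cb γ, (Nat.le_add_left _ _).trans_eq (ca_add_cb γ), (vv_eq_iff_cb_eq γ _).2 rfl⟩
  · rintro ⟨l, hl, rfl⟩
    have : Nonempty {γ : Wd m // cb γ = l} := by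
      rw [← Finite.card_pos_iff, card_cb_eq]
      exact Nat.choose_pos hl
    obtain ⟨γ, hγ⟩ := this
    exact ⟨γ, (vv_eq_iff_cb_eq γ l).2 hγ⟩

/-- STATEMENT 7: for every `n ≥ 2` (written `n = m+1` with `m ≥ 1`), the subspace
`Im D_{n−1} ⊆ ℂ(Q_n ∥ Q_1)` is invariant under the endomorphism `u ↦ [H,u]_Q`; the
eigenvalues of the restriction to `Im D_{n−1}` are exactly the integers
`n−1−2l = m−2l` for `l = 0, 1, …, m = n−1`, and for each such `l` the eigenspace of
the restriction for the eigenvalue `m−2l` has dimension `C(m,l) = C(n−1,l)`. -/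
theorem stmt7 (m : ℕ) (hm : 1 ≤ m) :
    ∃ hInv : ∀ u ∈ LinearMap.range (Dmap m),
        (brL H : CQ1 (m + 1) →ₗ[ℂ] CQ1 (m + 1)) u ∈ LinearMap.range (Dmap m),
      (∀ μ : ℂ, Module.End.HasEigenvalue (HonImD m hInv) μ ↔
        ∃ l : ℕ, l ≤ m ∧ μ = (m : ℂ) - 2 * l) ∧
      (∀ l : ℕ, l ≤ m →
        Module.finrank ℂ (Module.End.eigenspace (HonImD m hInv) ((m : ℂ) - 2 * l))
          = Nat.choose m l) := by
  have hconj : HonImD m (brL_H_mapsTo_range_Dmap m)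
      = (LinearEquiv.ofInjective _ (Dmap_injective hm)).conj (vvDiag m) :=
    LinearMap.restrict_range_eq_conj _ (brL_H_comp_Dmap m) _
  refine ⟨brL_H_mapsTo_range_Dmap m, fun μ => ?_, fun l _ => ?_⟩
  · rw [hconj, End.hasEigenvalue_conj_iff, vvDiag, hasEigenvalue_toLin'_diagonal_iff,
      exists_vv_eq_iff]
  · rw [hconj, End.eigenspace_conj, LinearEquiv.finrank_map_eq, vvDiag,
      finrank_eigenspace_toLin'_diagonal]
    simp_rw [vv_eq_iff_cb_eq]
    exact card_cb_eq m l

end TwoLoops
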